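/- For every integer k ≥ 0 and every parking preference α of length n, all rearrangements (permutations of the entries) of α are k-Naples parking functions if and only if the weakly increasing rearrangement of α is a k-Naples parking function. -/

import Mathlib

/-- The spots a car with preference `p` checks backward: `p-1, p-2, …, max(p-k,1)`. -/
def backCandidates (k p : ℕ) : List ℕ :=
  ((List.range k).map (fun i => p - (i + 1))).filter (fun s => decide (1 ≤ s))

/-- The spots a car with preference `p` checks when driving forward: `p+1, …, n`. -/
def fwdCandidates (n p : ℕ) : List ℕ :=
  List.range' (p + 1) (n - p)

/-- The spot in which a car with preference `p` parks under the `k`-Naples rule on a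
one-way street with `n` spots, given the set `occ` of already occupied spots
(`none` if the car fails to park). -/
def naplesStep (k n : ℕ) (occ : Finset ℕ) (p : ℕ) : Option ℕ :=
  if p ∈ occ then
    match (backCandidates k p).filter (fun s => decide (s ∉ occ)) with
    | s :: _ => some s
    | [] =>
      match (fwdCandidates n p).filter (fun s => decide (s ∉ occ)) with
      | s :: _ => some s
      | [] => none
  else some p

/-- Runs the `k`-Naples parking process starting from occupied set `occ` for cars with
the given list of preferences.  Returns the list of spots in which the successive cars
park, or `none` if some car fails to park. -/
def naplesSpots (k n : ℕ) : Finset ℕ → List ℕ → Option (List ℕ)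
  | _, [] => some []
  | occ, p :: rest =>
    match naplesStep k n occ p with
    | none => none
    | some s => (naplesSpots k n (insert s occ) rest).map (fun l => s :: l)

/-- All cars with the given preferences successfully park, starting from occupied set `occ`. -/
def ParksAllFrom (k n : ℕ) (occ : Finset ℕ) (prefs : List ℕ) : Prop :=
  (naplesSpots k n occ prefs).isSome

/-- A parking preference of length `n`: a list of `n` numbers in `{1, …, n}`. -/
def IsParkingPref (n : ℕ) (prefs : List ℕ) : Prop :=
  prefs.length = n ∧ ∀ p ∈ prefs, 1 ≤ p ∧ p ≤ n

/-- A `k`-Naples parking function of length `n`. -/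
def IsNaplesPF (k n : ℕ) (prefs : List ℕ) : Prop :=
  IsParkingPref n prefs ∧ ParksAllFrom k n ∅ prefs

/-!
Every rearrangement is reached from the increasing one by adjacent transpositions that put a
larger preference in front of a smaller one, so it suffices that such a swap preserves success.
Either the two cars fill the same pair of spots in both orders, or they first take the same spot
and then the smaller preference parks weakly left of the larger one. In the latter case the
remaining cars start from occupied sets `B` and `A` where every tail `[c, ∞)` holds at most as
many spots of `B` as of `A`. This tail domination survives each parking step: if a car parks at
`s` from `B` but at `t < s` from `A`, the parking rule forces `A` to be strictly ahead on every
tail starting in `(t, s]`. And a car fails from `B` only when all spots from its backward window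
up to `n` are taken, which domination then forces for `A` too.
-/

open Finset

lemma mem_backCandidates {k p x : ℕ} :
    x ∈ backCandidates k p ↔ 1 ≤ x ∧ p - k ≤ x ∧ x < p := by
  simp only [backCandidates, List.mem_filter, List.mem_map, List.mem_range, decide_eq_true_eq]
  constructor
  · rintro ⟨⟨i, hi, rfl⟩, h1⟩
    omega
  · rintro ⟨h1, h2, h3⟩
    exact ⟨⟨p - x - 1, by omega, by omega⟩, h1⟩

lemma mem_fwdCandidates {n p x : ℕ} : x ∈ fwdCandidates n p ↔ p < x ∧ x ≤ n := by
  simp only [fwdCandidates, List.mem_range']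
  constructor
  · rintro ⟨i, hi, rfl⟩
    omega
  · rintro ⟨h1, h2⟩
    exact ⟨x - (p + 1), by omega, by omega⟩

lemma pairwise_gt_backCandidates {k p : ℕ} : (backCandidates k p).Pairwise (· > ·) := by
  have h : ((List.range k).map (fun i => p - (i + 1))).Pairwise (fun a b => b < a ∨ b = 0) := by
    rw [List.pairwise_map]
    exact List.pairwise_lt_range.imp (by omega)
  refine (h.filter _).imp_of_mem fun _ hb hab => ?_
  have := (List.mem_filter.1 hb).2
  simp only [decide_eq_true_eq] at this
  omega

lemma pairwise_lt_fwdCandidates {n p : ℕ} : (fwdCandidates n p).Pairwise (· < ·) :=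
  List.pairwise_lt_range'

lemma List.find?_eq_some_iff_of_pairwise {α : Type*} {r : α → α → Prop}
    (hr : ∀ a b, r a b → ¬ r b a) {l : List α} (hl : l.Pairwise r) {q : α → Bool} {s : α} :
    l.find? q = some s ↔ s ∈ l ∧ q s ∧ ∀ x ∈ l, r x s → q x = false := by
  induction l with
  | nil => simp
  | cons a l ih =>
    rw [List.pairwise_cons] at hl
    by_cases hqa : q a
    · rw [List.find?_cons_of_pos hqa, Option.some_inj]
      constructor
      · rintro rfl
        refine ⟨List.mem_cons_self, hqa, fun x hx hxa => ?_⟩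
        rcases List.mem_cons.1 hx with rfl | hx
        · exact absurd hxa (fun h => hr x x h h)
        · exact absurd (hl.1 x hx) (hr x a hxa)
      · rintro ⟨hs, hqs, hmin⟩
        rcases List.mem_cons.1 hs with rfl | hs
        · rfl
        · simpa [hqa] using hmin a List.mem_cons_self (hl.1 s hs)
    · rw [List.find?_cons_of_neg hqa, ih hl.2, List.forall_mem_cons]
      simp only [Bool.not_eq_true] at hqa
      constructor
      · rintro ⟨hs, hqs, hmin⟩
        exact ⟨List.mem_cons_of_mem a hs, hqs, fun _ => hqa, hmin⟩
      · rintro ⟨hs, hqs, -, hmin⟩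
        rcases List.mem_cons.1 hs with rfl | hs
        · simp [hqa] at hqs
        · exact ⟨hs, hqs, hmin⟩

lemma naplesStep_eq (k n : ℕ) (D : Finset ℕ) (p : ℕ) :
    naplesStep k n D p = if p ∈ D then
      ((backCandidates k p).find? (fun s => s ∉ D)).or
        ((fwdCandidates n p).find? (fun s => s ∉ D))
    else some p := by
  unfold naplesStep
  split_ifs
  · rw [← List.head?_filter, ← List.head?_filter]
    split <;> rename_i h <;> rw [h]
    · rfl
    · split <;> rename_i h' <;> rw [h'] <;> rfl
  · rfl

def ParksAt (k n : ℕ) (D : Finset ℕ) (p s : ℕ) : Prop :=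
  s ∉ D ∧
    (s = p ∨
      (1 ≤ s ∧ p - k ≤ s ∧ s < p ∧ ∀ x, s < x → x ≤ p → x ∈ D) ∨
      (p < s ∧ s ≤ n ∧ ∀ x, 1 ≤ x → p - k ≤ x → x < s → x ∈ D))

lemma naplesStep_eq_some_iff {k n p s : ℕ} {D : Finset ℕ} (hp1 : 1 ≤ p) :
    naplesStep k n D p = some s ↔ ParksAt k n D p s := by
  have hback := List.find?_eq_some_iff_of_pairwise (fun a b => Nat.lt_asymm)
    (pairwise_gt_backCandidates (k := k) (p := p)) (q := fun s => s ∉ D) (s := s)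
  have hfwd := List.find?_eq_some_iff_of_pairwise (fun a b => Nat.lt_asymm)
    (pairwise_lt_fwdCandidates (n := n) (p := p)) (q := fun s => s ∉ D) (s := s)
  simp only [mem_backCandidates, mem_fwdCandidates, decide_eq_true_eq, decide_eq_false_iff_not,
    not_not] at hback hfwd
  have hback_none : (backCandidates k p).find? (fun s => s ∉ D) = none ↔
      ∀ x, 1 ≤ x → p - k ≤ x → x < p → x ∈ D := by
    simp [List.find?_eq_none, mem_backCandidates]
  rw [naplesStep_eq, ParksAt]
  by_cases hpD : p ∈ D
  · rw [if_pos hpD, Option.or_eq_some_iff, hback, hback_none, hfwd]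
    constructor
    · rintro (⟨⟨hs1, hsk, hsp⟩, hsD, hmin⟩ | ⟨hnone, ⟨hps, hsn⟩, hsD, hmin⟩)
      · refine ⟨hsD, Or.inr (Or.inl ⟨hs1, hsk, hsp, fun x hsx hxp => ?_⟩)⟩
        rcases hxp.lt_or_eq with hxp | rfl
        · exact hmin x ⟨by omega, by omega, hxp⟩ hsx
        · exact hpD
      · refine ⟨hsD, Or.inr (Or.inr ⟨hps, hsn, fun x hx1 hxk hxs => ?_⟩)⟩
        rcases lt_trichotomy x p with hxp | rfl | hpx
        · exact hnone x hx1 hxk hxp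
        · exact hpD
        · exact hmin x ⟨hpx, by omega⟩ hxs
    · rintro ⟨hsD, rfl | ⟨hs1, hsk, hsp, hfill⟩ | ⟨hps, hsn, hfill⟩⟩
      · exact absurd hpD hsD
      · exact Or.inl ⟨⟨hs1, hsk, hsp⟩, hsD, fun x _ hsx => hfill x hsx (by omega)⟩
      · exact Or.inr ⟨fun x hx1 hxk hxp => hfill x hx1 hxk (by omega), ⟨hps, hsn⟩, hsD,
          fun x hx hxs => hfill x (by omega) (by omega) hxs⟩
  · rw [if_neg hpD, Option.some_inj]
    constructor
    · rintro rfl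
      exact ⟨hpD, Or.inl rfl⟩
    · rintro ⟨hsD, rfl | ⟨-, -, hsp, hfill⟩ | ⟨hps, -, hfill⟩⟩
      · rfl
      · exact absurd (hfill p hsp le_rfl) hpD
      · exact absurd (hfill p hp1 (by omega) (by omega)) hpD

lemma naplesStep_eq_none_iff {k n p : ℕ} {D : Finset ℕ} (hp1 : 1 ≤ p) (hpn : p ≤ n) :
    naplesStep k n D p = none ↔ ∀ x, 1 ≤ x → p - k ≤ x → x ≤ n → x ∈ D := by
  rw [naplesStep_eq]
  by_cases hpD : p ∈ D
  · simp only [if_pos hpD, Option.or_eq_none_iff, List.find?_eq_none, mem_backCandidates,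
      mem_fwdCandidates, decide_eq_true_eq, not_not]
    constructor
    · rintro ⟨hback, hfwd⟩ x hx1 hxk hxn
      rcases lt_trichotomy x p with hxp | rfl | hpx
      · exact hback x ⟨hx1, hxk, hxp⟩
      · exact hpD
      · exact hfwd x ⟨hpx, hxn⟩
    · intro hfill
      exact ⟨fun x hx => hfill x hx.1 hx.2.1 (by omega),
        fun x hx => hfill x (by omega) (by omega) hx.2⟩
  · simp only [if_neg hpD, reduceCtorEq, false_iff, not_forall]
    exact ⟨p, hp1, by omega, hpn, hpD⟩

namespace ParksAt

variable {k n p s : ℕ} {D : Finset ℕ}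

lemma bounds (hp1 : 1 ≤ p) (hpn : p ≤ n) (h : ParksAt k n D p s) :
    1 ≤ s ∧ p - k ≤ s ∧ s ≤ n := by
  obtain ⟨-, rfl | h | h⟩ := h <;> omega

lemma insert_of_ne {v : ℕ} (h : ParksAt k n D p s) (hv : v ≠ s) :
    ParksAt k n (insert v D) p s := by
  obtain ⟨hsD, h⟩ := h
  refine ⟨by simp [hv.symm, hsD], ?_⟩
  rcases h with rfl | ⟨h1, h2, h3, hfill⟩ | ⟨h1, h2, hfill⟩
  · exact Or.inl rfl
  · exact Or.inr (Or.inl ⟨h1, h2, h3, fun x a b => mem_insert_of_mem (hfill x a b)⟩)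
  · exact Or.inr (Or.inr ⟨h1, h2, fun x a b c => mem_insert_of_mem (hfill x a b c)⟩)

end ParksAt

lemma naplesStep_eq_none_of_subset {k n p : ℕ} {D D' : Finset ℕ} (hp1 : 1 ≤ p) (hpn : p ≤ n)
    (h : naplesStep k n D p = none) (hDD' : D ⊆ D') : naplesStep k n D' p = none := by
  rw [naplesStep_eq_none_iff hp1 hpn] at h ⊢
  exact fun x h1 h2 h3 => hDD' (h x h1 h2 h3)

lemma exists_naplesStep_le_of_le {k n a b t : ℕ} {D : Finset ℕ}
    (ha1 : 1 ≤ a) (hab : a ≤ b) (hbn : b ≤ n) (ht : ParksAt k n D b t) :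
    ∃ s, naplesStep k n D a = some s ∧ s ≤ t := by
  obtain ⟨ht1, htk, htn⟩ := ht.bounds (by omega) hbn
  obtain ⟨s, hs⟩ : ∃ s, naplesStep k n D a = some s := by
    refine Option.ne_none_iff_exists'.1 fun hnone => ht.1 ?_
    exact (naplesStep_eq_none_iff ha1 (by omega)).1 hnone t ht1 (by omega) htn
  refine ⟨s, hs, not_lt.1 fun hts => ?_⟩
  obtain ⟨hsD, hs⟩ := (naplesStep_eq_some_iff ha1).1 hs
  by_cases hsa : s ≤ a
  · obtain ⟨-, rfl | ⟨-, -, -, hfill⟩ | ⟨hbt, -⟩⟩ := ht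
    · omega
    · exact hsD (hfill s hts (by omega))
    · omega
  · obtain ⟨-, -, hfill⟩ : a < s ∧ s ≤ n ∧ ∀ x, 1 ≤ x → a - k ≤ x → x < s → x ∈ D := by
      rcases hs with rfl | ⟨-, -, hsa', -⟩ | h
      · omega
      · omega
      · exact h
    exact ht.1 (hfill t ht1 (by omega) hts)

def tailCount (c : ℕ) (D : Finset ℕ) : ℕ := #{x ∈ D | c ≤ x}

def TailDominated (B A : Finset ℕ) : Prop := ∀ c, tailCount c B ≤ tailCount c A

lemma tailCount_insert {c x : ℕ} {D : Finset ℕ} (h : x ∉ D) :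
    tailCount c (insert x D) = tailCount c D + if c ≤ x then 1 else 0 := by
  unfold tailCount
  rw [filter_insert]
  split_ifs with hcx
  · exact card_insert_of_notMem fun hx => h (mem_filter.1 hx).1
  · rfl

lemma tailCount_eq_card_inter_Ico_add {a b : ℕ} (D : Finset ℕ) (hab : a ≤ b) :
    tailCount a D = #(D ∩ Ico a b) + tailCount b D := by
  unfold tailCount
  rw [← card_union_of_disjoint]
  · congr 1
    ext x
    simp only [mem_filter, mem_union, mem_inter, mem_Ico, ← and_or_left]
    exact and_congr_right fun _ => by omega
  · rw [disjoint_left]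
    intro x hx hx'
    simp only [mem_filter, mem_inter, mem_Ico] at hx hx'
    omega

lemma tailCount_lt_of_Ico_subset_right {B A : Finset ℕ} {c m s : ℕ} (hA : Ico c m ⊆ A)
    (hs : s ∈ Ico c m) (hsB : s ∉ B) (hm : tailCount m B ≤ tailCount m A) :
    tailCount c B < tailCount c A := by
  have hcm : c ≤ m := by simp only [mem_Ico] at hs; omega
  have hB : #(B ∩ Ico c m) < #(A ∩ Ico c m) := by
    rw [inter_eq_right.2 hA]
    exact card_lt_card ⟨inter_subset_right, fun h => hsB (mem_of_mem_inter_left (h hs))⟩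
  rw [tailCount_eq_card_inter_Ico_add B hcm, tailCount_eq_card_inter_Ico_add A hcm]
  omega

lemma tailCount_lt_of_Ico_subset_left {B A : Finset ℕ} {a c t : ℕ} (hB : Ico a c ⊆ B)
    (ht : t ∈ Ico a c) (htA : t ∉ A) (ha : tailCount a B ≤ tailCount a A) :
    tailCount c B < tailCount c A := by
  have hac : a ≤ c := by simp only [mem_Ico] at ht; omega
  have hA : #(A ∩ Ico a c) < #(B ∩ Ico a c) := by
    rw [inter_eq_right.2 hB]
    exact card_lt_card ⟨inter_subset_right, fun h => htA (mem_of_mem_inter_left (h ht))⟩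
  rw [tailCount_eq_card_inter_Ico_add B hac, tailCount_eq_card_inter_Ico_add A hac] at ha
  omega

lemma TailDominated.insert_insert {B A : Finset ℕ} {x y : ℕ} (h : TailDominated B A) (hx : x ∉ B)
    (hy : y ∉ A) (hstrict : ∀ c, y < c → c ≤ x → tailCount c B < tailCount c A) :
    TailDominated (insert x B) (insert y A) := by
  intro c
  rw [tailCount_insert hx, tailCount_insert hy]
  have := h c
  split_ifs with hcx hcy <;> first | omega | exact Nat.succ_le_of_lt (hstrict c (by omega) hcx)

lemma Icc_subset_of_tailDominated {B A : Finset ℕ} {c n : ℕ} (hA : A ⊆ Icc 1 n)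
    (h : TailDominated B A) (hB : Icc c n ⊆ B) : Icc c n ⊆ A := by
  have hBc : Icc c n ⊆ B.filter (c ≤ ·) := fun x hx => mem_filter.2 ⟨hB hx, (mem_Icc.1 hx).1⟩
  have hAc : A.filter (c ≤ ·) ⊆ Icc c n := fun x hx =>
    mem_Icc.2 ⟨(mem_filter.1 hx).2, (mem_Icc.1 (hA (mem_filter.1 hx).1)).2⟩
  have := eq_of_subset_of_card_le hAc ((card_le_card hBc).trans (h c))
  exact this ▸ filter_subset _ _

lemma tailCount_lt_of_parksAt {k n p s t c : ℕ} {B A : Finset ℕ} (hp1 : 1 ≤ p) (hpn : p ≤ n)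
    (hdom : TailDominated B A) (hs : ParksAt k n B p s) (ht : ParksAt k n A p t)
    (htc : t < c) (hcs : c ≤ s) : tailCount c B < tailCount c A := by
  by_cases hsp : s ≤ p
  · -- the car backed up from `p` to `t` in `A`, so `[c, p]` is full in `A`, while `s ∉ B`
    obtain ⟨-, rfl | ⟨-, -, -, hfill⟩ | ⟨hpt, -⟩⟩ := ht
    · omega
    · refine tailCount_lt_of_Ico_subset_right (m := p + 1) (fun x hx => ?_) ?_ hs.1 (hdom _)
      · simp only [mem_Ico] at hx
        exact hfill x (by omega) (by omega)
      · simp only [mem_Ico]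
        omega
    · omega
  · -- the car drove forward to `s` in `B`, so `[t, c)` is full in `B`, while `t ∉ A`
    obtain ⟨-, -, hfill⟩ : p < s ∧ s ≤ n ∧ ∀ x, 1 ≤ x → p - k ≤ x → x < s → x ∈ B := by
      rcases hs.2 with rfl | ⟨-, -, hsp', -⟩ | h
      · omega
      · omega
      · exact h
    obtain ⟨ht1, htk, -⟩ := ht.bounds hp1 hpn
    refine tailCount_lt_of_Ico_subset_left (fun x hx => ?_) (a := t) ?_ ht.1 (hdom _)
    · simp only [mem_Ico] at hx
      exact hfill x (by omega) (by omega) (by omega)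
    · simp only [mem_Ico]
      omega

lemma TailDominated.insert_of_parksAt {k n p s t : ℕ} {B A : Finset ℕ} (hp1 : 1 ≤ p)
    (hpn : p ≤ n) (hdom : TailDominated B A) (hs : ParksAt k n B p s)
    (ht : ParksAt k n A p t) : TailDominated (insert s B) (insert t A) :=
  hdom.insert_insert hs.1 ht.1 fun _ htc hcs => tailCount_lt_of_parksAt hp1 hpn hdom hs ht htc hcs

lemma exists_naplesStep_of_tailDominated {k n p t : ℕ} {B A : Finset ℕ}
    (hA : A ⊆ Icc 1 n) (hdom : TailDominated B A) (hp1 : 1 ≤ p) (hpn : p ≤ n)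
    (ht : naplesStep k n A p = some t) : ∃ s, naplesStep k n B p = some s := by
  refine Option.ne_none_iff_exists'.1 fun hnone => ?_
  have hfull : Icc (max (p - k) 1) n ⊆ A := by
    refine Icc_subset_of_tailDominated hA hdom fun x hx => ?_
    simp only [mem_Icc] at hx
    exact (naplesStep_eq_none_iff hp1 hpn).1 hnone x (by omega) (by omega) hx.2
  have : naplesStep k n A p = none := by
    refine (naplesStep_eq_none_iff hp1 hpn).2 fun x hx1 hxk hxn => hfull ?_
    simp only [mem_Icc]
    omega
  simp [this] at ht

lemma naplesStep_mem_Icc {k n p s : ℕ} {D : Finset ℕ} (hp1 : 1 ≤ p) (hpn : p ≤ n)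
    (h : naplesStep k n D p = some s) : s ∈ Icc 1 n := by
  obtain ⟨hs1, -, hsn⟩ := ((naplesStep_eq_some_iff hp1).1 h).bounds hp1 hpn
  exact mem_Icc.2 ⟨hs1, hsn⟩

namespace ParksAllFrom

variable {k n : ℕ}

lemma cons_iff {C : Finset ℕ} {p : ℕ} {L : List ℕ} :
    ParksAllFrom k n C (p :: L) ↔
      ∃ s, naplesStep k n C p = some s ∧ ParksAllFrom k n (insert s C) L := by
  unfold ParksAllFrom
  cases h : naplesStep k n C p <;> simp [naplesSpots, h]

lemma of_tailDominated {L : List ℕ} (hL : ∀ p ∈ L, 1 ≤ p ∧ p ≤ n) {B A : Finset ℕ}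
    (hA : A ⊆ Icc 1 n) (hdom : TailDominated B A) (h : ParksAllFrom k n A L) :
    ParksAllFrom k n B L := by
  induction L generalizing B A with
  | nil => rfl
  | cons p L ih =>
    obtain ⟨hp1, hpn⟩ := hL p List.mem_cons_self
    obtain ⟨t, ht, hrest⟩ := cons_iff.1 h
    obtain ⟨s, hs⟩ := exists_naplesStep_of_tailDominated hA hdom hp1 hpn ht
    refine cons_iff.2 ⟨s, hs, ih (fun q hq => hL q (List.mem_cons_of_mem p hq))
      (insert_subset (naplesStep_mem_Icc hp1 hpn ht) hA) ?_ hrest⟩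
    rw [naplesStep_eq_some_iff hp1] at hs ht
    exact hdom.insert_of_parksAt hp1 hpn hs ht

lemma swap {C : Finset ℕ} {a b : ℕ} {R : List ℕ} (hC : C ⊆ Icc 1 n) (ha1 : 1 ≤ a)
    (hab : a ≤ b) (hbn : b ≤ n) (hR : ∀ p ∈ R, 1 ≤ p ∧ p ≤ n)
    (h : ParksAllFrom k n C (a :: b :: R)) : ParksAllFrom k n C (b :: a :: R) := by
  have hb1 : 1 ≤ b := ha1.trans hab
  have han : a ≤ n := hab.trans hbn
  obtain ⟨s₁, hs₁, h⟩ := cons_iff.1 h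
  obtain ⟨s₂, hs₂, hrest⟩ := cons_iff.1 h
  obtain ⟨t₁, ht₁⟩ : ∃ t₁, naplesStep k n C b = some t₁ := by
    refine Option.ne_none_iff_exists'.1 fun hnone => ?_
    rw [naplesStep_eq_none_of_subset hb1 hbn hnone (subset_insert s₁ C)] at hs₂
    cases hs₂
  refine cons_iff.2 ⟨t₁, ht₁, ?_⟩
  have hs₁' := (naplesStep_eq_some_iff ha1).1 hs₁
  have ht₁' := (naplesStep_eq_some_iff hb1).1 ht₁
  by_cases hts : t₁ = s₁
  · -- both orders start by filling `s₁`; then car `a` parks weakly left of where `b` did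
    subst hts
    obtain ⟨t₂, ht₂, ht₂s₂⟩ :=
      exists_naplesStep_le_of_le ha1 hab hbn ((naplesStep_eq_some_iff hb1).1 hs₂)
    refine cons_iff.2 ⟨t₂, ht₂, of_tailDominated hR ?_ ?_ hrest⟩
    · exact insert_subset (naplesStep_mem_Icc hb1 hbn hs₂)
        (insert_subset (naplesStep_mem_Icc ha1 han hs₁) hC)
    · exact TailDominated.insert_insert (fun _ => le_rfl)
        ((naplesStep_eq_some_iff ha1).1 ht₂).1 ((naplesStep_eq_some_iff hb1).1 hs₂).1
        fun _ _ _ => by omega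
  · -- the two cars do not interfere: the same two spots get filled
    obtain rfl : s₂ = t₁ := Option.some_inj.1 <| hs₂.symm.trans <|
      (naplesStep_eq_some_iff hb1).2 (ht₁'.insert_of_ne fun h => hts h.symm)
    refine cons_iff.2 ⟨s₁, (naplesStep_eq_some_iff ha1).2 (hs₁'.insert_of_ne hts), ?_⟩
    rwa [insert_comm]

lemma of_orderedInsert {p : ℕ} (hp : 1 ≤ p ∧ p ≤ n) {M : List ℕ}
    (hM : ∀ q ∈ M, 1 ≤ q ∧ q ≤ n) {C : Finset ℕ} (hC : C ⊆ Icc 1 n)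
    (h : ParksAllFrom k n C (M.orderedInsert (· ≤ ·) p)) : ParksAllFrom k n C (p :: M) := by
  induction M generalizing C with
  | nil => exact h
  | cons m M ih =>
    rw [List.orderedInsert_cons] at h
    split_ifs at h with hpm
    · exact h
    obtain ⟨hm1, hmn⟩ := hM m List.mem_cons_self
    have hM' : ∀ q ∈ M, 1 ≤ q ∧ q ≤ n := fun q hq => hM q (List.mem_cons_of_mem m hq)
    obtain ⟨s, hs, hrest⟩ := cons_iff.1 h
    have hsC := insert_subset (naplesStep_mem_Icc hm1 hmn hs) hC
    exact swap hC hm1 (by omega) hp.2 hM' (cons_iff.2 ⟨s, hs, ih hM' hsC hrest⟩)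

lemma of_insertionSort {L : List ℕ} (hL : ∀ p ∈ L, 1 ≤ p ∧ p ≤ n) {C : Finset ℕ}
    (hC : C ⊆ Icc 1 n) (h : ParksAllFrom k n C (L.insertionSort (· ≤ ·))) :
    ParksAllFrom k n C L := by
  induction L generalizing C with
  | nil => exact h
  | cons p L ih =>
    obtain ⟨hp1, hpn⟩ := hL p List.mem_cons_self
    have hL' : ∀ q ∈ L, 1 ≤ q ∧ q ≤ n := fun q hq => hL q (List.mem_cons_of_mem p hq)
    rw [List.insertionSort_cons] at h
    obtain ⟨s, hs, hrest⟩ := cons_iff.1 <| of_orderedInsert ⟨hp1, hpn⟩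
      (fun q hq => hL' q ((List.perm_insertionSort _ L).subset hq)) hC h
    exact cons_iff.2 ⟨s, hs, ih hL' (insert_subset (naplesStep_mem_Icc hp1 hpn hs) hC) hrest⟩

end ParksAllFrom

/-- Theorem on rearrangements.
For every `k ≥ 0` and every parking preference `α` of length `n`, all rearrangements of `α`
are `k`-Naples parking functions if and only if the weakly increasing rearrangement of `α`
is a `k`-Naples parking function. -/
theorem statement1 (k n : ℕ) (α : List ℕ) (hα : IsParkingPref n α) :
    (∀ q : List ℕ, q.Perm α → IsNaplesPF k n q) ↔
      (∀ q : List ℕ, q.Perm α → List.Pairwise (· ≤ ·) q → IsNaplesPF k n q) := by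
  refine ⟨fun h q hq _ => h q hq, fun h q hq => ?_⟩
  have hq_pref : IsParkingPref n q := ⟨hq.length_eq.trans hα.1, fun p hp => hα.2 p (hq.subset hp)⟩
  have hsorted := h (q.insertionSort (· ≤ ·)) ((List.perm_insertionSort _ q).trans hq)
    (List.pairwise_insertionSort _ q)
  exact ⟨hq_pref, ParksAllFrom.of_insertionSort hq_pref.2 (empty_subset _) hsorted.2⟩
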